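/- arXiv:2307.15474 — 3 statements merged into one kernel-verified Lean document; each statement's English description precedes it below -/
import Mathlib

section
/- Let M be a partially ordered monoid, (Y, h_Y) an M-valued metric space, and let S, T, X, Z be sets. Let 𝒜 ⊆ X^T, Λ, I : 𝒜 → Y, λ : 𝒜 → Z^S, and φ : λ(𝒜) → M satisfy: (a) for all f ∈ 𝒜, h_Y(Λf, If) ≤ φ(λf); (b) there exists ℬ ⊆ 𝒜 such that h_Y(Λf, If) = φ(λf) for all f ∈ ℬ; (c) there is a sequence (f_n) ⊆ ℬ such that (φ(λ f_n)) is extremal for the set φ(λ(𝒜)) = {φ(λf) : f ∈ 𝒜}. Then the sequence (h_Y(Λ f_n, I f_n)) is extremal for the set {h_Y(Λf, If) : f ∈ 𝒜}. -/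
/-- A sequence `u` with values in `N` is extremal for `N` if every upper bound of
the sequence is an upper bound of `N`. -/
def ExtremalSeq {M : Type*} [PartialOrder M] (N : Set M) (u : ℕ → M) : Prop :=
  (∀ n, u n ∈ N) ∧ ∀ y : M, (∀ n, u n ≤ y) → ∀ x ∈ N, x ≤ y

/-- The main lemma: if `h(Λf, If) ≤ φ(λf)` on `𝒜`, with equality on `ℬ ⊆ 𝒜`, and
`(φ(λ fₙ))` (with `fₙ ∈ ℬ`) is extremal for `φ(λ(𝒜))`, then `(h(Λfₙ, Ifₙ))` is
extremal for `{h(Λf, If) : f ∈ 𝒜}`.  Here `M` is a partially ordered monoid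
(identity `0`, order compatible with right addition, `M₊ ≠ {0}`) and `h` is an
`M`-valued metric on `Y`. -/
theorem stmt1 {M Y S T X Z : Type*} [AddMonoid M] [PartialOrder M]
    (hcompat : ∀ α β γ : M, α ≤ β → α + γ ≤ β + γ)
    (hMplus : {α : M | 0 ≤ α} ≠ {0})
    (h : Y → Y → M)
    (hnonneg : ∀ u v : Y, 0 ≤ h u v)
    (hzero : ∀ u v : Y, h u v = 0 ↔ u = v)
    (hsymm : ∀ u v : Y, h u v = h v u)
    (htri : ∀ u v z : Y, h u v ≤ h u z + h z v)
    (𝒜 ℬ : Set (T → X)) (Λ I : (T → X) → Y) (lam : (T → X) → S → Z)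
    (φ : (S → Z) → M)
    (ha : ∀ f ∈ 𝒜, h (Λ f) (I f) ≤ φ (lam f))
    (hBA : ℬ ⊆ 𝒜)
    (hb : ∀ f ∈ ℬ, h (Λ f) (I f) = φ (lam f))
    (F : ℕ → T → X) (hF : ∀ n, F n ∈ ℬ)
    (hc : ExtremalSeq {m : M | ∃ f ∈ 𝒜, m = φ (lam f)} (fun n => φ (lam (F n)))) :
    ExtremalSeq {m : M | ∃ f ∈ 𝒜, m = h (Λ f) (I f)}
      (fun n => h (Λ (F n)) (I (F n))) := by
  constructor
  · intro n
    exact ⟨F n, hBA (hF n), rfl⟩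
  · intro y hy x hx
    obtain ⟨f, hfA, rfl⟩ := hx
    have h1 : ∀ n, φ (lam (F n)) ≤ y := fun n => (hb (F n) (hF n)) ▸ hy n
    exact le_trans (ha f hfA) (hc.2 y h1 _ ⟨f, hfA, rfl⟩)
end

section
/- Let f, w : [a,b] → ℝ be absolutely continuous with w positive on [a,b], and let p : [a,b] → ℝ be integrable. Then for each x ∈ [a,b], ∫_a^b p(t) f(t) dt − (∫_a^b p(t) w(t) dt) · f(x)/w(x) = ∫_a^b r_x(s) Df(s) ds, where Df = (f/w)′ and r_x(s) = −∫_a^s p(t) w(t) dt for s ≤ x and r_x(s) = ∫_s^b p(t) w(t) dt for s ≥ x. -/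
/-! With `g = f / w`, so that `g(t) = g(a) + ∫ₐᵗ Df`, the integral `∫ p f = ∫ (p w) g` equals
`(∫ p w) g(a) + ∫ₐᵇ p w (t) ∫ₐᵗ Df`. Fubini on the triangle `s ≤ t` turns the last term into
`∫ₐᵇ (∫ₛᵇ p w) Df(s)`, and subtracting `(∫ p w)(g(x) - g(a)) = ∫ₐˣ (∫ₐᵇ p w) Df` replaces
`∫ₛᵇ p w` by `-∫ₐˢ p w` for `s ≤ x`, which is the kernel `rₓ`. -/

open MeasureTheory intervalIntegral

theorem continuousOn_Icc_of_eq_add_primitive {a b : ℝ} (hab : a ≤ b) {w w' : ℝ → ℝ}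
    (hw' : IntervalIntegrable w' volume a b)
    (hw : ∀ y ∈ Set.Icc a b, w y = w a + ∫ t in a..y, w' t) :
    ContinuousOn w (Set.Icc a b) := by
  rw [← Set.uIcc_of_le hab] at hw ⊢
  exact (continuousOn_const.add (continuousOn_primitive_interval' hw' Set.left_mem_uIcc)).congr hw

theorem intervalIntegral_mul_primitive_eq_integral_primitive_mul {a b : ℝ} (hab : a ≤ b)
    {F G : ℝ → ℝ} (hF : IntervalIntegrable F volume a b) (hG : IntervalIntegrable G volume a b) :
    ∫ t in a..b, F t * ∫ s in a..t, G s = ∫ s in a..b, (∫ t in s..b, F t) * G s := by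
  set μ := volume.restrict (Set.Ioc a b)
  set K := {z : ℝ × ℝ | z.2 ≤ z.1}.indicator fun z => F z.1 * G z.2
  have hK : Integrable K (μ.prod μ) :=
    (hF.1.mul_prod hG.1).indicator (measurableSet_le measurable_snd measurable_fst)
  have inner_left : Set.EqOn (fun t => ∫ s, K (t, s) ∂μ) (fun t => F t * ∫ s in a..t, G s)
      (Set.Ioc a b) := by
    intro t ht
    have hKt : (fun s => K (t, s)) = (Set.Iic t).indicator fun s => F t * G s := by
      ext s; simp [K, Set.indicator_apply]
    simp only [μ, hKt, setIntegral_indicator measurableSet_Iic, Set.Ioc_inter_Iic,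
      min_eq_right ht.2, MeasureTheory.integral_const_mul, integral_of_le ht.1.le]
  have inner_right : Set.EqOn (fun s => ∫ t, K (t, s) ∂μ) (fun s => (∫ t in s..b, F t) * G s)
      (Set.Ioc a b) := by
    intro s hs
    have hKs : (fun t => K (t, s)) = (Set.Ici s).indicator fun t => F t * G s := by
      ext t; simp [K, Set.indicator_apply]
    have hIcc : Set.Ioc a b ∩ Set.Ici s = Set.Icc s b := by
      ext t; simp only [Set.mem_inter_iff, Set.mem_Ioc, Set.mem_Ici, Set.mem_Icc]
      constructor
      · rintro ⟨⟨-, htb⟩, hst⟩; exact ⟨hst, htb⟩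
      · rintro ⟨hst, htb⟩; exact ⟨⟨hs.1.trans_le hst, htb⟩, hst⟩
    simp only [μ, hKs, setIntegral_indicator measurableSet_Ici, hIcc,
      MeasureTheory.integral_mul_const, integral_Icc_eq_integral_Ioc, integral_of_le hs.2]
  rw [integral_of_le hab, integral_of_le hab,
    ← setIntegral_congr_fun measurableSet_Ioc inner_left,
    ← setIntegral_congr_fun measurableSet_Ioc inner_right]
  exact integral_integral_swap hK

theorem intervalIntegral_mul_primitive_eq_add_integral_kernel_mul {a b x : ℝ}
    (hx : x ∈ Set.Icc a b) {F G : ℝ → ℝ} (hF : IntervalIntegrable F volume a b)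
    (hG : IntervalIntegrable G volume a b) :
    ∫ t in a..b, F t * ∫ s in a..t, G s =
      (∫ t in a..b, F t) * (∫ s in a..x, G s) +
        ∫ s in a..b, (if s ≤ x then -(∫ t in a..s, F t) else ∫ t in s..b, F t) * G s := by
  have hab : a ≤ b := hx.1.trans hx.2
  have hkernel : Set.EqOn
      (fun s => (if s ≤ x then -(∫ t in a..s, F t) else ∫ t in s..b, F t) * G s)
      (fun s => (∫ t in s..b, F t) * G s -
        {u | u ≤ x}.indicator (fun u => (∫ t in a..b, F t) * G u) s)
      (Set.uIcc a b) := by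
    intro s hs
    rw [Set.uIcc_of_le hab] at hs
    by_cases hsx : s ≤ x
    · have hsplit := integral_add_adjacent_intervals
        (hF.mono_set (Set.uIcc_subset_uIcc_left (Set.mem_uIcc_of_le hs.1 hs.2)))
        (hF.mono_set (Set.uIcc_subset_uIcc_right (Set.mem_uIcc_of_le hs.1 hs.2)))
      simp only [hsx, if_true, Set.indicator_of_mem (show s ∈ {u | u ≤ x} from hsx), ← hsplit]
      ring
    · simp [hsx]
  have hFs : IntervalIntegrable (fun s => (∫ t in s..b, F t) * G s) volume a b :=
    hG.continuousOn_mul <|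
      continuousOn_primitive_interval_left ((intervalIntegrable_iff' (f := F)).1 hF)
  have hGx : IntervalIntegrable ({u | u ≤ x}.indicator fun u => (∫ t in a..b, F t) * G u)
      volume a b :=
    intervalIntegrable_iff.2 <|
      (intervalIntegrable_iff.1 (hG.const_mul _)).indicator measurableSet_Iic
  rw [integral_congr hkernel, integral_sub hFs hGx, integral_indicator hx,
    intervalIntegral.integral_const_mul,
    intervalIntegral_mul_primitive_eq_integral_primitive_mul hab hF hG]
  ring

theorem stmt3_general (a b : ℝ) (f w p Df : ℝ → ℝ)
    (hwAC : ∃ w' : ℝ → ℝ, IntervalIntegrable w' volume a b ∧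
      ∀ y ∈ Set.Icc a b, w y = w a + ∫ t in a..y, w' t)
    (hwpos : ∀ t ∈ Set.Icc a b, 0 < w t)
    (hp : IntervalIntegrable p volume a b)
    (hDf : IntervalIntegrable Df volume a b)
    (hFTC : ∀ y ∈ Set.Icc a b, f y / w y = f a / w a + ∫ t in a..y, Df t)
    (x : ℝ) (hx : x ∈ Set.Icc a b) :
    (∫ t in a..b, p t * f t) - (∫ t in a..b, p t * w t) * (f x / w x)
      = ∫ s in a..b,
          (if s ≤ x then -(∫ t in a..s, p t * w t) else ∫ t in s..b, p t * w t) * Df s := by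
  obtain ⟨w', hw', hw⟩ := hwAC
  have hab : a ≤ b := hx.1.trans hx.2
  have hpw : IntervalIntegrable (fun t => p t * w t) volume a b :=
    hp.mul_continuousOn <| by
      rw [Set.uIcc_of_le hab]; exact continuousOn_Icc_of_eq_add_primitive hab hw' hw
  have hpf : Set.EqOn (fun t => p t * f t)
      (fun t => p t * w t * (f a / w a) + p t * w t * ∫ s in a..t, Df s) (Set.uIcc a b) := by
    intro t ht
    rw [Set.uIcc_of_le hab] at ht
    dsimp only
    rw [← mul_add, ← hFTC t ht, mul_assoc, mul_div_cancel₀ _ (hwpos t ht).ne']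
  rw [integral_congr hpf, integral_add (hpw.mul_const _)
      (hpw.mul_continuousOn (continuousOn_primitive_interval' hDf Set.left_mem_uIcc)),
    intervalIntegral.integral_mul_const,
    intervalIntegral_mul_primitive_eq_add_integral_kernel_mul hx hpw hDf, hFTC x hx]
  ring

/-- Lemma on the integral representation: for absolutely continuous `f, w` on `[a,b]`
with `w > 0`, integrable `p`, and `x ∈ [a,b]`,
`∫ p f − (∫ p w)·f(x)/w(x) = ∫ rₓ(s)·Df(s) ds` where `Df = (f/w)'` (given via its
integral representation) and `rₓ` is the piecewise kernel built from `p·w`.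
Absolute continuity is encoded through the fundamental theorem of calculus with an
integrable (a.e.) derivative. -/
theorem stmt3 (a b : ℝ) (hab : a < b) (f w p Df : ℝ → ℝ)
    (hfAC : ∃ f' : ℝ → ℝ, IntervalIntegrable f' volume a b ∧
      ∀ y ∈ Set.Icc a b, f y = f a + ∫ t in a..y, f' t)
    (hwAC : ∃ w' : ℝ → ℝ, IntervalIntegrable w' volume a b ∧
      ∀ y ∈ Set.Icc a b, w y = w a + ∫ t in a..y, w' t)
    (hwpos : ∀ t ∈ Set.Icc a b, 0 < w t)
    (hp : IntervalIntegrable p volume a b)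
    (hDf : IntervalIntegrable Df volume a b)
    (hFTC : ∀ y ∈ Set.Icc a b, f y / w y = f a / w a + ∫ t in a..y, Df t)
    (x : ℝ) (hx : x ∈ Set.Icc a b) :
    (∫ t in a..b, p t * f t) - (∫ t in a..b, p t * w t) * (f x / w x)
      = ∫ s in a..b,
          (if s ≤ x then -(∫ t in a..s, p t * w t) else ∫ t in s..b, p t * w t) * Df s :=
  stmt3_general a b f w p Df hwAC hwpos hp hDf hFTC x hx
end

section
/- Let w_1, …, w_n be positive functions on [a,b] with w_k^{(n−k)} absolutely continuous, and define D_0 f = f, D_k f = ((1/w_k) D_{k−1} f)′ for k = 1, …, n. Let p be integrable on [a,b], x ∈ [a,b], and define r_x^0 = p, r_x^k = r_x(w_k r_x^{k−1}). Then for f sufficiently smooth, ∫_a^b p(t) f(t) dt − Σ_{k=0}^{n−1} (∫_a^b r_x^k(t) w_{k+1}(t) dt) · D_k f(x)/w_{k+1}(x) = ∫_a^b r_x^n(t) D_n f(t) dt. -/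
/-
Writing `q = w_{k+1} r_x^k` and `F = D_k f / w_{k+1}`, the kernel `r_x^{k+1}` is, on each side
of `x`, the antiderivative of `-q` vanishing at `a` resp. `b`. Splitting `F = F(x) + ∫_x^t F'` and
integrating by parts on `[a, x]` and `[x, b]` (with absolutely continuous primitives) gives
`∫ r_x^k D_k f = (∫ r_x^k w_{k+1}) · F(x) + ∫ r_x^{k+1} D_{k+1} f`, and these identities telescope.
-/

open MeasureTheory intervalIntegral

/-- The weighted kernels `r_x^k`: `r_x^0 = p` and
`r_x^{k+1}(s) = −∫_a^s w_{k+1} r_x^k` for `s ≤ x`, `∫_s^b w_{k+1} r_x^k` for `s ≥ x`. -/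
noncomputable def rkw (a b x : ℝ) (w : ℕ → ℝ → ℝ) (p : ℝ → ℝ) : ℕ → ℝ → ℝ
  | 0 => p
  | k + 1 => fun s =>
      if s ≤ x then -(∫ t in a..s, w (k + 1) t * rkw a b x w p k t)
      else ∫ t in s..b, w (k + 1) t * rkw a b x w p k t

open Set
open scoped Interval

theorem IntervalIntegrable.ae_deriv_primitive_eq {q : ℝ → ℝ} {a b : ℝ}
    (hq : IntervalIntegrable q volume a b) :
    ∀ᵐ t, t ∈ Ι a b → deriv (fun s => ∫ u in a..s, q u) t = q t := by
  filter_upwards [hq.ae_hasDerivAt_integral] with t ht hmem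
  exact (ht (uIoc_subset_uIcc hmem) a left_mem_uIcc).deriv

theorem integral_mul_integral_to_eq_integral_from_mul {q g : ℝ → ℝ} {a b : ℝ}
    (hq : IntervalIntegrable q volume a b) (hg : IntervalIntegrable g volume a b) :
    ∫ t in a..b, q t * ∫ s in t..b, g s = ∫ s in a..b, (∫ t in a..s, q t) * g s := by
  have hP := hq.absolutelyContinuousOnInterval_intervalIntegral left_mem_uIcc
  have hG := hg.absolutelyContinuousOnInterval_intervalIntegral left_mem_uIcc
  have parts := hP.integral_mul_deriv_eq_deriv_mul hG
  rw [integral_congr_ae (hg.ae_deriv_primitive_eq.mono fun t ht hmem => by rw [ht hmem]),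
    integral_congr_ae (f := fun t => deriv (fun s => ∫ u in a..s, q u) t * ∫ s in a..t, g s)
      (hq.ae_deriv_primitive_eq.mono fun t ht hmem => by rw [ht hmem])] at parts
  have tail : ∀ t ∈ uIcc a b, ∫ s in t..b, g s = (∫ s in a..b, g s) - ∫ s in a..t, g s :=
    fun t ht => (integral_interval_sub_left hg (hg.mono_set (uIcc_subset_uIcc_left ht))).symm
  rw [integral_congr fun t ht => by rw [tail t ht], parts]
  simp only [mul_sub, integral_same, mul_zero, sub_zero]
  rw [integral_sub (hq.mul_const _) (hq.mul_continuousOn hG.continuousOn),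
    intervalIntegral.integral_mul_const]

/-- The paper's `r_x(q; s)`. -/
noncomputable def splitPrimitive (a b x : ℝ) (q : ℝ → ℝ) (s : ℝ) : ℝ :=
  if s ≤ x then -∫ t in a..s, q t else ∫ t in s..b, q t

section splitPrimitive

variable {a b x : ℝ} {q g : ℝ → ℝ}

theorem splitPrimitive_of_le {s : ℝ} (hs : s ≤ x) :
    splitPrimitive a b x q s = -∫ t in a..s, q t := if_pos hs

theorem splitPrimitive_of_lt {s : ℝ} (hs : x < s) :
    splitPrimitive a b x q s = ∫ t in s..b, q t := if_neg hs.not_ge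

theorem intervalIntegrable_splitPrimitive_mul (hx : x ∈ Icc a b)
    (hq : IntervalIntegrable q volume a b) (hg : IntervalIntegrable g volume a b) :
    IntervalIntegrable (fun s => splitPrimitive a b x q s * g s) volume a b := by
  have hax : uIcc a x ⊆ uIcc a b := uIcc_subset_uIcc_left (mem_uIcc_of_le hx.1 hx.2)
  have hxb : uIcc x b ⊆ uIcc a b := uIcc_subset_uIcc_right (mem_uIcc_of_le hx.1 hx.2)
  have left : IntervalIntegrable (fun s => splitPrimitive a b x q s * g s) volume a x := by
    refine ((hg.mono_set hax).continuousOn_mul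
      (continuousOn_primitive_interval' (hq.mono_set hax) left_mem_uIcc).neg).congr
      fun s hs => ?_
    rw [uIoc_of_le hx.1] at hs
    simp only [splitPrimitive_of_le hs.2, Pi.neg_apply]
  have right : IntervalIntegrable (fun s => splitPrimitive a b x q s * g s) volume x b := by
    refine ((hg.mono_set hxb).continuousOn_mul (continuousOn_primitive_interval_left
      ((intervalIntegrable_iff' (by finiteness)).1 (hq.mono_set hxb)))).congr fun s hs => ?_
    rw [uIoc_of_le hx.2] at hs
    simp only [splitPrimitive_of_lt hs.1]
  exact left.trans right

theorem integral_mul_eq_add_integral_splitPrimitive_mul {F : ℝ → ℝ} (hx : x ∈ Icc a b)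
    (hq : IntervalIntegrable q volume a b) (hg : IntervalIntegrable g volume a b)
    (hF : ∀ y ∈ Icc a b, F y = F a + ∫ t in a..y, g t) :
    ∫ t in a..b, q t * F t
      = (∫ t in a..b, q t) * F x + ∫ t in a..b, splitPrimitive a b x q t * g t := by
  have hx' : x ∈ uIcc a b := mem_uIcc_of_le hx.1 hx.2
  have hax : uIcc a x ⊆ uIcc a b := uIcc_subset_uIcc_left hx'
  have hxb : uIcc x b ⊆ uIcc a b := uIcc_subset_uIcc_right hx'
  have hab : uIcc a b = Icc a b := uIcc_of_le (hx.1.trans hx.2)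
  set G := fun t => ∫ s in x..t, g s
  have hFG : ∀ t ∈ uIcc a b, F t = F x + G t := fun t ht => by
    have hsub := integral_interval_sub_left (hg.mono_set (uIcc_subset_uIcc_left ht))
      (hg.mono_set hax)
    rw [hab] at ht
    rw [hF t ht, hF x hx, show G t = _ from hsub.symm]
    ring
  have hqG : IntervalIntegrable (fun t => q t * G t) volume a b :=
    hq.mul_continuousOn (continuousOn_primitive_interval' hg hx')
  have hKg := intervalIntegrable_splitPrimitive_mul hx hq hg
  have left : ∫ t in a..x, q t * G t = ∫ t in a..x, splitPrimitive a b x q t * g t := by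
    calc ∫ t in a..x, q t * G t = -∫ t in a..x, q t * ∫ s in t..x, g s := by
          rw [← intervalIntegral.integral_neg]
          exact integral_congr fun t _ => by simp only [G, integral_symm t x, mul_neg]
      _ = ∫ s in a..x, -(∫ t in a..s, q t) * g s := by
          rw [integral_mul_integral_to_eq_integral_from_mul (hq.mono_set hax) (hg.mono_set hax),
            ← intervalIntegral.integral_neg]
          simp only [neg_mul]
      _ = _ := integral_congr fun s hs => by
          rw [uIcc_of_le hx.1] at hs
          simp only [splitPrimitive_of_le hs.2]
  have right : ∫ t in x..b, q t * G t = ∫ t in x..b, splitPrimitive a b x q t * g t := by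
    calc ∫ t in x..b, q t * G t = ∫ t in x..b, g t * ∫ s in t..b, q s := by
          rw [integral_mul_integral_to_eq_integral_from_mul (hg.mono_set hxb) (hq.mono_set hxb)]
          simp only [G, mul_comm]
      _ = _ := integral_congr_ae (Filter.Eventually.of_forall fun s hs => by
          rw [uIoc_of_le hx.2] at hs
          rw [splitPrimitive_of_lt hs.1, mul_comm])
  rw [integral_congr fun t ht => by rw [hFG t ht], ← integral_add_adjacent_intervals
    (hKg.mono_set hax) (hKg.mono_set hxb), ← left, ← right,
    integral_add_adjacent_intervals (hqG.mono_set hax) (hqG.mono_set hxb)]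
  simp only [mul_add]
  rw [integral_add (hq.mul_const _) hqG, intervalIntegral.integral_mul_const]

end splitPrimitive

section rkw

variable {a b x : ℝ} {w : ℕ → ℝ → ℝ} {p : ℝ → ℝ}

theorem rkw_succ (k : ℕ) :
    rkw a b x w p (k + 1) = splitPrimitive a b x (fun t => w (k + 1) t * rkw a b x w p k t) :=
  rfl

theorem intervalIntegrable_rkw {n : ℕ} (hx : x ∈ Icc a b)
    (hw : ∀ k < n, ContinuousOn (w (k + 1)) (Icc a b)) (hp : IntervalIntegrable p volume a b) :
    ∀ k ≤ n, IntervalIntegrable (rkw a b x w p k) volume a b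
  | 0, _ => hp
  | k + 1, hk => by
    have hwr := (intervalIntegrable_rkw hx hw hp k (by omega)).continuousOn_mul
      (uIcc_of_le (hx.1.trans hx.2) ▸ hw k hk)
    simpa [rkw_succ] using
      intervalIntegrable_splitPrimitive_mul hx hwr (intervalIntegrable_const (c := (1 : ℝ)))

theorem integral_rkw_mul_eq {k : ℕ} {D E : ℝ → ℝ} (hx : x ∈ Icc a b)
    (hr : IntervalIntegrable (rkw a b x w p k) volume a b)
    (hw : ContinuousOn (w (k + 1)) (Icc a b)) (hw0 : ∀ t ∈ Icc a b, w (k + 1) t ≠ 0)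
    (hE : IntervalIntegrable E volume a b)
    (hDE : ∀ y ∈ Icc a b, D y / w (k + 1) y = D a / w (k + 1) a + ∫ t in a..y, E t) :
    ∫ t in a..b, rkw a b x w p k t * D t
      = (∫ t in a..b, rkw a b x w p k t * w (k + 1) t) * (D x / w (k + 1) x)
        + ∫ t in a..b, rkw a b x w p (k + 1) t * E t := by
  have hab : uIcc a b = Icc a b := uIcc_of_le (hx.1.trans hx.2)
  calc ∫ t in a..b, rkw a b x w p k t * D t
      = ∫ t in a..b, (w (k + 1) t * rkw a b x w p k t) * (D t / w (k + 1) t) :=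
        integral_congr fun t ht => by field_simp [hw0 t (hab ▸ ht)]
    _ = _ := by
        rw [integral_mul_eq_add_integral_splitPrimitive_mul hx
          (hr.continuousOn_mul (hab ▸ hw)) hE hDE, ← rkw_succ]
        simp only [mul_comm (w (k + 1) _)]

end rkw

theorem stmt4_general (a b : ℝ) (n : ℕ)
    (w : ℕ → ℝ → ℝ)
    (hwpos : ∀ k, 1 ≤ k → k ≤ n → ∀ t ∈ Set.Icc a b, 0 < w k t)
    (hwsm : ∀ k, 1 ≤ k → k ≤ n →
      ContDiffOn ℝ (n - k) (w k) (Set.Icc a b) ∧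
      ∃ wd : ℝ → ℝ, IntervalIntegrable wd volume a b ∧
        ∀ y ∈ Set.Icc a b,
          iteratedDerivWithin (n - k) (w k) (Set.Icc a b) y
            = iteratedDerivWithin (n - k) (w k) (Set.Icc a b) a + ∫ t in a..y, wd t)
    (p : ℝ → ℝ) (hp : IntervalIntegrable p volume a b)
    (x : ℝ) (hx : x ∈ Set.Icc a b)
    (f : ℝ → ℝ) (Df : ℕ → ℝ → ℝ) (hD0 : Df 0 = f)
    (hint : ∀ k < n, IntervalIntegrable (Df (k + 1)) volume a b)
    (hFTC : ∀ k < n, ∀ y ∈ Set.Icc a b,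
      Df k y / w (k + 1) y = Df k a / w (k + 1) a + ∫ t in a..y, Df (k + 1) t) :
    (∫ t in a..b, p t * f t)
        - ∑ k ∈ Finset.range n,
            (∫ t in a..b, rkw a b x w p k t * w (k + 1) t) * (Df k x / w (k + 1) x)
      = ∫ t in a..b, rkw a b x w p n t * Df n t := by
  have hw : ∀ k < n, ContinuousOn (w (k + 1)) (Icc a b) := fun k hk =>
    (hwsm (k + 1) (by omega) hk).1.continuousOn
  have hr := intervalIntegrable_rkw hx hw hp
  have step : ∀ k ∈ Finset.range n,
      (∫ t in a..b, rkw a b x w p k t * w (k + 1) t) * (Df k x / w (k + 1) x)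
        = (∫ t in a..b, rkw a b x w p k t * Df k t)
          - ∫ t in a..b, rkw a b x w p (k + 1) t * Df (k + 1) t := fun k hk => by
    have hk : k < n := Finset.mem_range.1 hk
    rw [integral_rkw_mul_eq hx (hr k hk.le) (hw k hk)
      (fun t ht => (hwpos (k + 1) (by omega) hk t ht).ne') (hint k hk) (hFTC k hk)]
    ring
  rw [Finset.sum_congr rfl step, Finset.sum_range_sub', hD0]
  simp only [rkw, sub_sub_cancel]

/-- Integral representation with a general differential operator
`D₀f = f`, `D_k f = ((1/w_k) D_{k−1} f)'`:
`∫ p f − Σ_{k<n} (∫ r_x^k w_{k+1}) · D_k f(x)/w_{k+1}(x) = ∫ r_x^n · D_n f`.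
The weights `w_k` are positive with `w_k^{(n−k)}` absolutely continuous; the operators
`D_k f` are encoded by `Df k` via the fundamental theorem of calculus. -/
theorem stmt4 (a b : ℝ) (hab : a < b) (n : ℕ) (hn : 1 ≤ n)
    (w : ℕ → ℝ → ℝ)
    (hwpos : ∀ k, 1 ≤ k → k ≤ n → ∀ t ∈ Set.Icc a b, 0 < w k t)
    (hwsm : ∀ k, 1 ≤ k → k ≤ n →
      ContDiffOn ℝ (n - k) (w k) (Set.Icc a b) ∧
      ∃ wd : ℝ → ℝ, IntervalIntegrable wd volume a b ∧
        ∀ y ∈ Set.Icc a b,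
          iteratedDerivWithin (n - k) (w k) (Set.Icc a b) y
            = iteratedDerivWithin (n - k) (w k) (Set.Icc a b) a + ∫ t in a..y, wd t)
    (p : ℝ → ℝ) (hp : IntervalIntegrable p volume a b)
    (x : ℝ) (hx : x ∈ Set.Icc a b)
    (f : ℝ → ℝ) (Df : ℕ → ℝ → ℝ) (hD0 : Df 0 = f)
    (hint : ∀ k < n, IntervalIntegrable (Df (k + 1)) volume a b)
    (hFTC : ∀ k < n, ∀ y ∈ Set.Icc a b,
      Df k y / w (k + 1) y = Df k a / w (k + 1) a + ∫ t in a..y, Df (k + 1) t) :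
    (∫ t in a..b, p t * f t)
        - ∑ k ∈ Finset.range n,
            (∫ t in a..b, rkw a b x w p k t * w (k + 1) t) * (Df k x / w (k + 1) x)
      = ∫ t in a..b, rkw a b x w p n t * Df n t :=
  stmt4_general a b n w hwpos hwsm p hp x hx f Df hD0 hint hFTC
end
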